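/- (Gaussian decay of the reflecting remainder.) Let ν be a finite Borel measure on (0,∞) having a density V ∈ L²(0,∞) with ‖V‖_{L²(0,∞)} ≤ K, and for δ > 0 define R_δ ν(x) := ∫₀^∞ (2πδ)^{−1/2} exp(−(x + y)²/(2δ)) ν(dy) for x ≥ 0. Then for every m ∈ ℕ and every w > 0 there exists a constant C, depending only on m, K and w, such that for all δ ∈ (0, 1] and all x ≥ w: |∂_x^m (R_δ ν)(x)| ≤ C · exp(−x²/(4δ)). -/

import Mathlib

open MeasureTheory Filter Set Function
open scoped ENNReal Topology

noncomputable section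

set_option maxHeartbeats 1000000

/-- The reflecting Gaussian remainder
`R_δ ν (x) = ∫₀^∞ (2πδ)^{−1/2} e^{−(x+y)²/(2δ)} ν(dy)`. -/
def gaussRemainder (δ : ℝ) (ν : Measure ℝ) (x : ℝ) : ℝ :=
  ∫ y, (Real.sqrt (2 * Real.pi * δ))⁻¹ * Real.exp (-(x + y) ^ 2 / (2 * δ)) ∂ν


lemma aux_pow_le_factorial_mul_exp {x : ℝ} (hx : 0 ≤ x) (n : ℕ) :
    x ^ n ≤ n.factorial * Real.exp x := by
  have h := Real.pow_div_factorial_le_exp x hx n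
  have hf : (0:ℝ) < n.factorial := by exact_mod_cast n.factorial_pos
  calc x ^ n = x ^ n / n.factorial * n.factorial := by field_simp
    _ ≤ Real.exp x * n.factorial := by
        apply mul_le_mul_of_nonneg_right h hf.le
    _ = n.factorial * Real.exp x := mul_comm _ _

lemma aux_abs_pow_le (i : ℕ) (t : ℝ) :
    |t| ^ i ≤ (1 + i.factorial * (8:ℝ) ^ i) * Real.exp (t ^ 2 / 8) := by
  have hexp : (1:ℝ) ≤ Real.exp (t ^ 2 / 8) := Real.one_le_exp (by positivity)
  have h2i : t ^ (2 * i) ≤ i.factorial * (8:ℝ) ^ i * Real.exp (t ^ 2 / 8) := by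
    have h := aux_pow_le_factorial_mul_exp (x := t ^ 2 / 8) (by positivity) i
    have : t ^ (2 * i) = (t ^ 2 / 8) ^ i * 8 ^ i := by
      rw [div_pow, pow_mul]; field_simp
    rw [this]
    calc (t ^ 2 / 8) ^ i * 8 ^ i ≤ (i.factorial * Real.exp (t ^ 2 / 8)) * 8 ^ i := by
          apply mul_le_mul_of_nonneg_right h (by positivity)
      _ = i.factorial * (8:ℝ) ^ i * Real.exp (t ^ 2 / 8) := by ring
  rcases le_or_gt (|t|) 1 with h | h
  · have : |t| ^ i ≤ 1 := pow_le_one₀ (abs_nonneg t) h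
    have hf : (0:ℝ) ≤ (i.factorial : ℝ) * (8:ℝ)^i * Real.exp (t^2/8) := by positivity
    nlinarith
  · have h1 : |t| ^ i ≤ |t| ^ (2 * i) := pow_le_pow_right₀ h.le (by omega)
    have h2 : |t| ^ (2 * i) = t ^ (2 * i) := by
      rw [pow_mul, pow_mul, sq_abs]
    have hf : (0:ℝ) ≤ (i.factorial:ℝ) * (8:ℝ)^i * Real.exp (t^2/8) := by positivity
    calc |t| ^ i ≤ t ^ (2*i) := by rw [← h2]; exact h1
      _ ≤ (i.factorial:ℝ) * 8 ^ i * Real.exp (t^2/8) := h2i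
      _ ≤ (1 + (i.factorial:ℝ) * 8 ^ i) * Real.exp (t^2/8) := by nlinarith [Real.exp_pos (t^2/8)]
lemma aux_hermite_growth (n : ℕ) : ∃ A : ℝ, 0 < A ∧ ∀ t : ℝ,
    |(Polynomial.aeval t (Polynomial.hermite n) : ℝ)| ≤ A * Real.exp (t ^ 2 / 8) := by
  refine ⟨∑ i ∈ Finset.range (n+1),
      |((Polynomial.hermite n).coeff i : ℝ)| * (1 + i.factorial * (8:ℝ) ^ i) + 1, ?_, ?_⟩
  · have : (0:ℝ) ≤ ∑ i ∈ Finset.range (n+1),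
        |((Polynomial.hermite n).coeff i : ℝ)| * (1 + i.factorial * (8:ℝ) ^ i) := by
      apply Finset.sum_nonneg
      intro i _
      have : (0:ℝ) ≤ 1 + i.factorial * (8:ℝ)^i := by positivity
      positivity
    linarith
  · intro t
    have hrep : (Polynomial.aeval t (Polynomial.hermite n) : ℝ)
        = ∑ i ∈ Finset.range (n+1), ((Polynomial.hermite n).coeff i : ℝ) * t ^ i := by
      rw [← Polynomial.natDegree_hermite (n := n)]
      simpa [smul_eq_mul] using Polynomial.aeval_eq_sum_range (p := Polynomial.hermite n) t
    rw [hrep]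
    have hexp : (0:ℝ) < Real.exp (t^2/8) := Real.exp_pos _
    calc |∑ i ∈ Finset.range (n+1), ((Polynomial.hermite n).coeff i : ℝ) * t ^ i|
        ≤ ∑ i ∈ Finset.range (n+1), |((Polynomial.hermite n).coeff i : ℝ) * t ^ i| :=
          Finset.abs_sum_le_sum_abs _ _
      _ ≤ ∑ i ∈ Finset.range (n+1),
            |((Polynomial.hermite n).coeff i : ℝ)| * ((1 + i.factorial * (8:ℝ) ^ i) * Real.exp (t^2/8)) := by
          apply Finset.sum_le_sum
          intro i _
          rw [abs_mul, abs_pow]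
          exact mul_le_mul_of_nonneg_left (aux_abs_pow_le i t) (abs_nonneg _)
      _ = (∑ i ∈ Finset.range (n+1),
            |((Polynomial.hermite n).coeff i : ℝ)| * (1 + i.factorial * (8:ℝ) ^ i)) * Real.exp (t^2/8) := by
          rw [Finset.sum_mul]; apply Finset.sum_congr rfl; intros; ring
      _ ≤ _ := by nlinarith

lemma aux_iteratedDeriv_comp_const_mul {f : ℝ → ℝ} (hf : ContDiff ℝ ⊤ f) (c : ℝ) (n : ℕ) :
    iteratedDeriv n (fun x => f (c * x)) = fun x => c ^ n * iteratedDeriv n f (c * x) := by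
  induction n with
  | zero => simp
  | succ n ih =>
    rw [iteratedDeriv_succ, ih, iteratedDeriv_succ]
    funext x
    have hdiff : Differentiable ℝ (iteratedDeriv n f) :=
      hf.differentiable_iteratedDeriv n (by exact lt_top_iff_ne_top.2 (by simp))
    have hd : HasDerivAt (iteratedDeriv n f) (deriv (iteratedDeriv n f) (c * x)) (c * x) :=
      (hdiff (c * x)).hasDerivAt
    have hin : HasDerivAt (fun x : ℝ => c * x) c x := by
      simpa using (hasDerivAt_id x).const_mul c
    have hcomp : HasDerivAt (fun x : ℝ => iteratedDeriv n f (c * x))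
        (deriv (iteratedDeriv n f) (c * x) * c) x := hd.comp x hin
    have : HasDerivAt (fun x : ℝ => c ^ n * iteratedDeriv n f (c * x))
        (c ^ n * (deriv (iteratedDeriv n f) (c * x) * c)) x := hcomp.const_mul _
    rw [this.deriv]; ring

lemma aux_gauss_contDiff {δ : ℝ} (hδ : 0 < δ) :
    ContDiff ℝ ⊤ (fun u : ℝ => Real.exp (-u ^ 2 / (2 * δ))) := by
  apply Real.contDiff_exp.comp
  exact ((contDiff_id.pow 2).neg.div_const _)

lemma aux_gauss_eq {δ : ℝ} (hδ : 0 < δ) :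
    (fun u : ℝ => Real.exp (-u ^ 2 / (2 * δ)))
      = fun u : ℝ => Real.exp (-(((Real.sqrt δ)⁻¹ * u) ^ 2 / 2)) := by
  funext u
  congr 1
  have h : Real.sqrt δ ^ 2 = δ := Real.sq_sqrt hδ.le
  have hs : Real.sqrt δ ≠ 0 := by positivity
  rw [mul_pow, inv_pow, h]
  ring

lemma aux_gauss_iteratedDeriv_rep {δ : ℝ} (hδ : 0 < δ) (n : ℕ) (u : ℝ) :
    iteratedDeriv n (fun u : ℝ => Real.exp (-u ^ 2 / (2 * δ))) u
      = (Real.sqrt δ)⁻¹ ^ n * ((-1 : ℝ) ^ n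
          * (Polynomial.aeval ((Real.sqrt δ)⁻¹ * u) (Polynomial.hermite n) : ℝ)
          * Real.exp (-(((Real.sqrt δ)⁻¹ * u) ^ 2 / 2))) := by
  rw [aux_gauss_eq hδ]
  rw [aux_iteratedDeriv_comp_const_mul (f := fun y : ℝ => Real.exp (-(y ^ 2 / 2)))
    (by
      have h := aux_gauss_contDiff (δ := 1) one_pos
      have : (fun u : ℝ => Real.exp (-u ^ 2 / (2 * 1))) = fun y : ℝ => Real.exp (-(y ^ 2 / 2)) := by
        funext y; norm_num [neg_div]
      rwa [this] at h) ((Real.sqrt δ)⁻¹) n]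
  simp only [iteratedDeriv_eq_iterate]
  rw [Polynomial.deriv_gaussian_eq_hermite_mul_gaussian]

lemma aux_kill {s w : ℝ} (hs : 0 < s) (hs1 : s ≤ 1) (hw : 0 < w) (k : ℕ) :
    s⁻¹ ^ k * Real.exp (-((w / s) ^ 2 / 16)) ≤ k.factorial * (16 / w ^ 2) ^ k := by
  have hq0 : (0:ℝ) ≤ (w / s) ^ 2 / 16 := by positivity
  have h1 : (1:ℝ) ≤ s⁻¹ := (one_le_inv₀ hs).mpr hs1
  have h2 : s⁻¹ ^ k ≤ (s⁻¹ ^ 2) ^ k :=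
    pow_le_pow_left₀ (by positivity) (le_self_pow₀ h1 two_ne_zero) k
  have h3 : (s⁻¹ ^ 2) ^ k = (16 / w ^ 2) ^ k * ((w / s) ^ 2 / 16) ^ k := by
    rw [← mul_pow]
    congr 1
    field_simp
  have h4 : ((w / s) ^ 2 / 16) ^ k ≤ k.factorial * Real.exp ((w / s) ^ 2 / 16) :=
    aux_pow_le_factorial_mul_exp hq0 k
  have hexp : (0:ℝ) < Real.exp (-((w / s) ^ 2 / 16)) := Real.exp_pos _
  calc s⁻¹ ^ k * Real.exp (-((w / s) ^ 2 / 16))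
      ≤ (16 / w ^ 2) ^ k * ((w / s) ^ 2 / 16) ^ k * Real.exp (-((w / s) ^ 2 / 16)) := by
        rw [← h3]
        exact mul_le_mul_of_nonneg_right h2 hexp.le
    _ ≤ (16 / w ^ 2) ^ k * (k.factorial * Real.exp ((w / s) ^ 2 / 16)) * Real.exp (-((w / s) ^ 2 / 16)) := by
        apply mul_le_mul_of_nonneg_right _ hexp.le
        exact mul_le_mul_of_nonneg_left h4 (by positivity)
    _ = k.factorial * (16 / w ^ 2) ^ k * Real.exp ((w / s) ^ 2 / 16 + -((w / s) ^ 2 / 16)) := by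
        rw [Real.exp_add]; ring
    _ = k.factorial * (16 / w ^ 2) ^ k := by rw [add_neg_cancel, Real.exp_zero, mul_one]

lemma aux_hermite_gauss_le (n : ℕ) {A : ℝ} (hA : 0 < A)
    (hAb : ∀ t : ℝ, |(Polynomial.aeval t (Polynomial.hermite n) : ℝ)| ≤ A * Real.exp (t ^ 2 / 8))
    (t : ℝ) :
    |(Polynomial.aeval t (Polynomial.hermite n) : ℝ)| * Real.exp (-(t ^ 2 / 2)) ≤ A := by
  calc |(Polynomial.aeval t (Polynomial.hermite n) : ℝ)| * Real.exp (-(t ^ 2 / 2))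
      ≤ A * Real.exp (t ^ 2 / 8) * Real.exp (-(t ^ 2 / 2)) :=
        mul_le_mul_of_nonneg_right (hAb t) (Real.exp_pos _).le
    _ = A * Real.exp (t ^ 2 / 8 + -(t ^ 2 / 2)) := by rw [mul_assoc, Real.exp_add]
    _ ≤ A * 1 := mul_le_mul_of_nonneg_left
        (Real.exp_le_one_iff.mpr (by nlinarith [sq_nonneg t])) hA.le
    _ = A := mul_one A

lemma aux_gauss_iteratedDeriv_bound {δ : ℝ} (hδ : 0 < δ) (n : ℕ) :
    ∃ B : ℝ, 0 ≤ B ∧ ∀ u : ℝ, |iteratedDeriv n (fun u : ℝ => Real.exp (-u ^ 2 / (2 * δ))) u| ≤ B := by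
  obtain ⟨A, hA, hAb⟩ := aux_hermite_growth n
  have hs : (0:ℝ) < (Real.sqrt δ)⁻¹ ^ n := by positivity
  refine ⟨(Real.sqrt δ)⁻¹ ^ n * A, by positivity, fun u => ?_⟩
  rw [aux_gauss_iteratedDeriv_rep hδ]
  set t := (Real.sqrt δ)⁻¹ * u with ht
  simp only [abs_mul, abs_pow, abs_neg, abs_one, one_pow, one_mul, Real.abs_exp,
    abs_inv, abs_of_nonneg (Real.sqrt_nonneg δ)]
  exact mul_le_mul_of_nonneg_left (aux_hermite_gauss_le n hA hAb t) hs.le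

lemma aux_key {δ : ℝ} (hδ : 0 < δ) (ν : Measure ℝ) [IsFiniteMeasure ν] (n : ℕ) (x : ℝ) :
    iteratedDeriv n (gaussRemainder δ ν) x
      = ∫ y, (Real.sqrt (2 * Real.pi * δ))⁻¹
          * iteratedDeriv n (fun u : ℝ => Real.exp (-u ^ 2 / (2 * δ))) (x + y) ∂ν := by
  set G := fun u : ℝ => Real.exp (-u ^ 2 / (2 * δ)) with hG
  set c := (Real.sqrt (2 * Real.pi * δ))⁻¹ with hc
  have hc0 : 0 ≤ c := by positivity
  have hGsmooth := aux_gauss_contDiff hδ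
  have hdiffn : ∀ k : ℕ, Differentiable ℝ (iteratedDeriv k G) := fun k =>
    hGsmooth.differentiable_iteratedDeriv k (lt_top_iff_ne_top.2 (by simp))
  induction n generalizing x with
  | zero => simp only [iteratedDeriv_zero]; rfl
  | succ n ih =>
    rw [iteratedDeriv_succ]
    have hfun : iteratedDeriv n (gaussRemainder δ ν) = fun x => ∫ y, c * iteratedDeriv n G (x + y) ∂ν :=
      funext ih
    rw [hfun]
    obtain ⟨B, hB0, hB⟩ := aux_gauss_iteratedDeriv_bound hδ (n + 1)
    obtain ⟨B', hB'0, hB'⟩ := aux_gauss_iteratedDeriv_bound hδ n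
    have hcontk : ∀ k : ℕ, Continuous (iteratedDeriv k G) := fun k => (hdiffn k).continuous
    have hmeas : ∀ (k : ℕ) (x : ℝ), AEStronglyMeasurable (fun y => c * iteratedDeriv k G (x + y)) ν :=
      fun k x => (continuous_const.mul ((hcontk k).comp (continuous_const.add continuous_id))).aestronglyMeasurable
    have key := hasDerivAt_integral_of_dominated_loc_of_deriv_le (μ := ν) (𝕜 := ℝ)
      (F := fun x y => c * iteratedDeriv n G (x + y))
      (F' := fun x y => c * iteratedDeriv (n + 1) G (x + y))
      (x₀ := x) (s := Metric.ball x 1) (bound := fun _ => c * B) (Metric.ball_mem_nhds x one_pos)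
      (Eventually.of_forall fun x => hmeas n x)
      (Integrable.mono' (integrable_const (c * B')) (hmeas n x)
        (Eventually.of_forall fun y => by
          rw [Real.norm_eq_abs, abs_mul, abs_of_nonneg hc0]
          exact mul_le_mul_of_nonneg_left (hB' _) hc0))
      (hmeas (n + 1) x)
      (Eventually.of_forall fun y x' _ => by
        rw [Real.norm_eq_abs, abs_mul, abs_of_nonneg hc0]
        exact mul_le_mul_of_nonneg_left (hB _) hc0)
      (integrable_const _)
      (Eventually.of_forall fun y x' _ => by
        have hd : HasDerivAt (iteratedDeriv n G) (iteratedDeriv (n + 1) G (x' + y)) (x' + y) := by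
          rw [iteratedDeriv_succ]
          exact (hdiffn n (x' + y)).hasDerivAt
        have hin : HasDerivAt (fun x' : ℝ => x' + y) 1 x' := (hasDerivAt_id x').add_const y
        have := (hd.comp x' hin).const_mul c
        simpa using this)
    exact key.2.deriv

lemma aux_gauss_lintegral {δ : ℝ} (hδ : 0 < δ) (hδ1 : δ ≤ 1) :
    ∫⁻ y in Set.Ioi 0, ENNReal.ofReal (Real.exp (-y ^ 2 / (4 * δ)))
      ≤ ENNReal.ofReal (Real.sqrt (4 * Real.pi)) := by
  have hb : (0:ℝ) < 1 / (4 * δ) := by positivity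
  have hgeq : (fun y : ℝ => Real.exp (-y ^ 2 / (4 * δ))) = fun y => Real.exp (-(1 / (4 * δ)) * y ^ 2) := by
    funext y; congr 1; field_simp
  have hintg : Integrable (fun y : ℝ => Real.exp (-y ^ 2 / (4 * δ))) := by
    rw [hgeq]; exact integrable_exp_neg_mul_sq hb
  calc ∫⁻ y in Set.Ioi 0, ENNReal.ofReal (Real.exp (-y ^ 2 / (4 * δ)))
      ≤ ∫⁻ y, ENNReal.ofReal (Real.exp (-y ^ 2 / (4 * δ))) := setLIntegral_le_lintegral _ _
    _ = ENNReal.ofReal (∫ y, Real.exp (-y ^ 2 / (4 * δ))) :=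
        (ofReal_integral_eq_lintegral_ofReal hintg
          (Eventually.of_forall fun y => (Real.exp_pos _).le)).symm
    _ ≤ ENNReal.ofReal (Real.sqrt (4 * Real.pi)) := by
        apply ENNReal.ofReal_le_ofReal
        have h2 : ∫ y : ℝ, Real.exp (-y ^ 2 / (4 * δ)) = Real.sqrt (Real.pi / (1 / (4 * δ))) := by
          rw [hgeq]; exact integral_gaussian _
        rw [h2]
        apply Real.sqrt_le_sqrt
        rw [div_div_eq_mul_div, div_one]
        nlinarith [Real.pi_pos]

lemma aux_L2_lintegral {K : ℝ} (hK : 0 < K) {V : ℝ → ℝ} (hV0 : ∀ x, 0 ≤ V x)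
    (hVL2 : eLpNorm V 2 (volume.restrict (Set.Ioi 0)) ≤ ENNReal.ofReal K) :
    ∫⁻ y in Set.Ioi 0, ENNReal.ofReal (V y) ^ 2 ≤ ENNReal.ofReal K ^ 2 := by
  have heq : eLpNorm V 2 (volume.restrict (Set.Ioi 0))
      = (∫⁻ y in Set.Ioi 0, ENNReal.ofReal (V y) ^ 2) ^ (1 / (2:ℝ)) := by
    rw [eLpNorm_eq_lintegral_rpow_enorm_toReal (by norm_num) (by norm_num)]
    congr 1
    · apply lintegral_congr
      intro y
      rw [Real.enorm_eq_ofReal (hV0 y)]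
      rw [← ENNReal.rpow_natCast (ENNReal.ofReal (V y)) 2]
      norm_num
  rw [heq] at hVL2
  calc ∫⁻ y in Set.Ioi 0, ENNReal.ofReal (V y) ^ 2
      = ((∫⁻ y in Set.Ioi 0, ENNReal.ofReal (V y) ^ 2) ^ (1 / (2:ℝ))) ^ (2:ℕ) := by
        rw [← ENNReal.rpow_natCast _ 2, ← ENNReal.rpow_mul]
        norm_num
    _ ≤ ENNReal.ofReal K ^ 2 := pow_le_pow_left' hVL2 2

lemma aux_V_vanish {V : ℝ → ℝ} (hVm : Measurable V) (hV0 : ∀ x, 0 ≤ V x)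
    {ν : Measure ℝ} (hνd : ν = volume.withDensity (fun x => ENNReal.ofReal (V x)))
    (hν0 : ν {x : ℝ | x ≤ 0} = 0) :
    ∀ᵐ y ∂(volume : Measure ℝ), y ≤ 0 → V y = 0 := by
  have h1 : ν (Set.Iic 0) = ∫⁻ y in Set.Iic 0, ENNReal.ofReal (V y) := by
    rw [hνd]
    exact withDensity_apply _ measurableSet_Iic
  have hν0' : (∫⁻ y in Set.Iic 0, ENNReal.ofReal (V y)) = 0 := by
    rw [← h1]; exact hν0
  have h2 : (fun y => ENNReal.ofReal (V y)) =ᵐ[volume.restrict (Set.Iic 0)] 0 :=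
    (lintegral_eq_zero_iff hVm.ennreal_ofReal).mp hν0'
  have h3 := (ae_restrict_iff' measurableSet_Iic).mp h2
  filter_upwards [h3] with y hy hy0
  have := hy hy0
  simp only [Pi.zero_apply, ENNReal.ofReal_eq_zero] at this
  exact le_antisymm this (hV0 y)

lemma aux_measure_integral {K δ : ℝ} (hK : 0 < K) (hδ : 0 < δ) (hδ1 : δ ≤ 1)
    (ν : Measure ℝ) (V : ℝ → ℝ) (hVm : Measurable V) (hV0 : ∀ x, 0 ≤ V x)
    (hνd : ν = volume.withDensity (fun x => ENNReal.ofReal (V x)))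
    (hν0 : ν {x : ℝ | x ≤ 0} = 0)
    (hVL2 : eLpNorm V 2 (volume.restrict (Set.Ioi 0)) ≤ ENNReal.ofReal K) :
    ∫ y, Real.exp (-y ^ 2 / (4 * δ)) ∂ν ≤ (Real.sqrt (4 * Real.pi) + K ^ 2) / 2 := by
  have hgc : Continuous (fun y : ℝ => Real.exp (-y ^ 2 / (4 * δ))) :=
    Real.continuous_exp.comp ((continuous_id.pow 2).neg.div_const _)
  have hg0 : ∀ y : ℝ, 0 ≤ Real.exp (-y ^ 2 / (4 * δ)) := fun y => (Real.exp_pos _).le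
  have hg1 : ∀ y : ℝ, Real.exp (-y ^ 2 / (4 * δ)) ≤ 1 := fun y =>
    Real.exp_le_one_iff.mpr (by rw [neg_div]; exact neg_nonpos.mpr (by positivity))
  have hgm : Measurable fun y : ℝ => ENNReal.ofReal (Real.exp (-y ^ 2 / (4 * δ))) :=
    hgc.measurable.ennreal_ofReal
  have hVem : Measurable fun y => ENNReal.ofReal (V y) := hVm.ennreal_ofReal
  have hVae := aux_V_vanish hVm hV0 hνd hν0
  have hint : ∫ y, Real.exp (-y ^ 2 / (4 * δ)) ∂ν
      = (∫⁻ y, ENNReal.ofReal (Real.exp (-y ^ 2 / (4 * δ))) ∂ν).toReal :=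
    integral_eq_lintegral_of_nonneg_ae (Eventually.of_forall hg0) hgc.aestronglyMeasurable
  have hWD : ∫⁻ y, ENNReal.ofReal (Real.exp (-y ^ 2 / (4 * δ))) ∂ν
      = ∫⁻ y, ENNReal.ofReal (V y) * ENNReal.ofReal (Real.exp (-y ^ 2 / (4 * δ))) := by
    rw [hνd, lintegral_withDensity_eq_lintegral_mul _ hVem hgm]
    rfl
  have hpt : ∀ᵐ y ∂(volume : Measure ℝ),
      ENNReal.ofReal (V y) * ENNReal.ofReal (Real.exp (-y ^ 2 / (4 * δ)))
        ≤ Set.indicator (Set.Ioi 0)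
            (fun y => 2⁻¹ * (ENNReal.ofReal (Real.exp (-y ^ 2 / (4 * δ))) + ENNReal.ofReal (V y) ^ 2)) y := by
    filter_upwards [hVae] with y hy
    rcases le_or_gt y 0 with h | h
    · rw [hy h]; simp
    · rw [Set.indicator_of_mem (Set.mem_Ioi.mpr h)]
      have hreal : V y * Real.exp (-y ^ 2 / (4 * δ))
          ≤ (Real.exp (-y ^ 2 / (4 * δ)) + V y ^ 2) / 2 := by
        nlinarith [mul_nonneg (sq_nonneg (V y - 1)) (hg0 y),
          mul_nonneg (sub_nonneg.mpr (hg1 y)) (sq_nonneg (V y))]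
      calc ENNReal.ofReal (V y) * ENNReal.ofReal (Real.exp (-y ^ 2 / (4 * δ)))
          = ENNReal.ofReal (V y * Real.exp (-y ^ 2 / (4 * δ))) := (ENNReal.ofReal_mul (hV0 y)).symm
        _ ≤ ENNReal.ofReal ((Real.exp (-y ^ 2 / (4 * δ)) + V y ^ 2) / 2) := ENNReal.ofReal_le_ofReal hreal
        _ = 2⁻¹ * (ENNReal.ofReal (Real.exp (-y ^ 2 / (4 * δ))) + ENNReal.ofReal (V y) ^ 2) := by
            rw [div_eq_inv_mul, ENNReal.ofReal_mul (by norm_num),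
              ENNReal.ofReal_add (hg0 y) (sq_nonneg _), ENNReal.ofReal_pow (hV0 y)]
            congr 1
            rw [ENNReal.ofReal_inv_of_pos (by norm_num)]
            norm_num
  have hfinal : ∫⁻ y, ENNReal.ofReal (V y) * ENNReal.ofReal (Real.exp (-y ^ 2 / (4 * δ)))
      ≤ ENNReal.ofReal ((Real.sqrt (4 * Real.pi) + K ^ 2) / 2) := by
    calc ∫⁻ y, ENNReal.ofReal (V y) * ENNReal.ofReal (Real.exp (-y ^ 2 / (4 * δ)))
        ≤ ∫⁻ y, Set.indicator (Set.Ioi 0)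
            (fun y => 2⁻¹ * (ENNReal.ofReal (Real.exp (-y ^ 2 / (4 * δ))) + ENNReal.ofReal (V y) ^ 2)) y :=
          lintegral_mono_ae hpt
      _ = ∫⁻ y in Set.Ioi 0, 2⁻¹ * (ENNReal.ofReal (Real.exp (-y ^ 2 / (4 * δ))) + ENNReal.ofReal (V y) ^ 2) :=
          lintegral_indicator measurableSet_Ioi _
      _ = 2⁻¹ * ∫⁻ y in Set.Ioi 0, (ENNReal.ofReal (Real.exp (-y ^ 2 / (4 * δ))) + ENNReal.ofReal (V y) ^ 2) :=
          lintegral_const_mul _ (hgm.add (hVem.pow_const 2))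
      _ = 2⁻¹ * ((∫⁻ y in Set.Ioi 0, ENNReal.ofReal (Real.exp (-y ^ 2 / (4 * δ))))
            + ∫⁻ y in Set.Ioi 0, ENNReal.ofReal (V y) ^ 2) := by
          rw [lintegral_add_left hgm]
      _ ≤ 2⁻¹ * (ENNReal.ofReal (Real.sqrt (4 * Real.pi)) + ENNReal.ofReal K ^ 2) := by
          gcongr
          · exact aux_gauss_lintegral hδ hδ1
          · exact aux_L2_lintegral hK hV0 hVL2
      _ = ENNReal.ofReal ((Real.sqrt (4 * Real.pi) + K ^ 2) / 2) := by
          rw [div_eq_inv_mul, ENNReal.ofReal_mul (by norm_num),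
            ENNReal.ofReal_add (Real.sqrt_nonneg _) (sq_nonneg K), ENNReal.ofReal_pow hK.le]
          congr 1
          rw [ENNReal.ofReal_inv_of_pos (by norm_num)]
          norm_num
  rw [hint, hWD]
  exact ENNReal.toReal_le_of_le_ofReal (by positivity) hfinal

theorem gauss_remainder_decay
    (m : ℕ) (K : ℝ) (hK : 0 < K) (w : ℝ) (hw : 0 < w) :
    ∃ C > (0 : ℝ),
      ∀ (ν : Measure ℝ), IsFiniteMeasure ν → ν {x : ℝ | x ≤ 0} = 0 →
      ∀ V : ℝ → ℝ, Measurable V → (∀ x, 0 ≤ V x) →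
        ν = volume.withDensity (fun x => ENNReal.ofReal (V x)) →
        eLpNorm V 2 (volume.restrict (Set.Ioi 0)) ≤ ENNReal.ofReal K →
      ∀ δ ∈ Set.Ioc (0 : ℝ) 1, ∀ x : ℝ, w ≤ x →
        |iteratedDeriv m (gaussRemainder δ ν) x| ≤ C * Real.exp (-x ^ 2 / (4 * δ)) := by
  obtain ⟨A, hA, hAb⟩ := aux_hermite_growth m
  have hD0 : (0:ℝ) < (m+1).factorial * (16 / w ^ 2) ^ (m+1) := by positivity
  have hE0 : (0:ℝ) < (Real.sqrt (4 * Real.pi) + K ^ 2) / 2 := by positivity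
  refine ⟨A * ((m+1).factorial * (16 / w ^ 2) ^ (m+1)) * ((Real.sqrt (4 * Real.pi) + K ^ 2) / 2) + 1,
    by positivity, ?_⟩
  intro ν hfin hν0 V hVm hV0 hνd hVL2 δ hδ x hx
  haveI := hfin
  obtain ⟨hδ0, hδ1⟩ := hδ
  have hxpos : 0 < x := lt_of_lt_of_le hw hx
  have hs0 : 0 < Real.sqrt δ := Real.sqrt_pos.mpr hδ0
  have hs1 : Real.sqrt δ ≤ 1 := by
    rw [show (1:ℝ) = Real.sqrt 1 by simp]
    exact Real.sqrt_le_sqrt hδ1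
  have hsq : Real.sqrt δ ^ 2 = δ := Real.sq_sqrt hδ0.le
  have hc : (Real.sqrt (2 * Real.pi * δ))⁻¹ ≤ (Real.sqrt δ)⁻¹ := by
    apply inv_anti₀ hs0
    apply Real.sqrt_le_sqrt
    nlinarith [Real.pi_gt_three]
  have hc0 : (0:ℝ) ≤ (Real.sqrt (2 * Real.pi * δ))⁻¹ := by positivity
  -- pointwise bound
  have hmain : ∀ y : ℝ, 0 < y →
      |(Real.sqrt (2 * Real.pi * δ))⁻¹
          * iteratedDeriv m (fun u : ℝ => Real.exp (-u ^ 2 / (2 * δ))) (x + y)|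
        ≤ (A * ((m+1).factorial * (16 / w ^ 2) ^ (m+1)) * Real.exp (-x ^ 2 / (4 * δ)))
            * Real.exp (-y ^ 2 / (4 * δ)) := by
    intro y hy
    have hxy0 : 0 < x + y := by linarith
    have habs : |iteratedDeriv m (fun u : ℝ => Real.exp (-u ^ 2 / (2 * δ))) (x + y)|
        = (Real.sqrt δ)⁻¹ ^ m
          * (|(Polynomial.aeval ((Real.sqrt δ)⁻¹ * (x + y)) (Polynomial.hermite m) : ℝ)|
            * Real.exp (-(((Real.sqrt δ)⁻¹ * (x + y)) ^ 2 / 2))) := by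
      rw [aux_gauss_iteratedDeriv_rep hδ0 m (x + y)]
      simp only [abs_mul, abs_pow, abs_neg, abs_one, one_pow, one_mul, Real.abs_exp,
        abs_inv, abs_of_nonneg (Real.sqrt_nonneg δ)]
    have ht2 : ((Real.sqrt δ)⁻¹ * (x + y)) ^ 2 = (x + y) ^ 2 / δ := by
      rw [mul_pow, inv_pow, hsq]
      ring
    have hsplit : Real.exp (-(((Real.sqrt δ)⁻¹ * (x + y)) ^ 2 / 2))
        = Real.exp (-(((Real.sqrt δ)⁻¹ * (x + y)) ^ 2 / 16))
          * (Real.exp (-(((Real.sqrt δ)⁻¹ * (x + y)) ^ 2 / 8))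
          * (Real.exp (-(((Real.sqrt δ)⁻¹ * (x + y)) ^ 2 / 4))
          * Real.exp (-(((Real.sqrt δ)⁻¹ * (x + y)) ^ 2 / 16)))) := by
      rw [← Real.exp_add, ← Real.exp_add, ← Real.exp_add]
      congr 1
      ring
    -- factor bounds
    have hb1 : (Real.sqrt δ)⁻¹ ^ (m + 1) * Real.exp (-(((Real.sqrt δ)⁻¹ * (x + y)) ^ 2 / 16))
        ≤ (m+1).factorial * (16 / w ^ 2) ^ (m+1) := by
      have hwt : (w / Real.sqrt δ) ^ 2 ≤ ((Real.sqrt δ)⁻¹ * (x + y)) ^ 2 := by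
        rw [div_eq_mul_inv, mul_comm]
        apply pow_le_pow_left₀ (by positivity)
        apply mul_le_mul_of_nonneg_left (by linarith) (by positivity)
      calc (Real.sqrt δ)⁻¹ ^ (m + 1) * Real.exp (-(((Real.sqrt δ)⁻¹ * (x + y)) ^ 2 / 16))
          ≤ (Real.sqrt δ)⁻¹ ^ (m + 1) * Real.exp (-((w / Real.sqrt δ) ^ 2 / 16)) := by
            apply mul_le_mul_of_nonneg_left _ (by positivity)
            apply Real.exp_le_exp.mpr
            apply neg_le_neg
            linarith
        _ ≤ (m+1).factorial * (16 / w ^ 2) ^ (m+1) := aux_kill hs0 hs1 hw (m+1)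
    have hb2 : |(Polynomial.aeval ((Real.sqrt δ)⁻¹ * (x + y)) (Polynomial.hermite m) : ℝ)|
        * Real.exp (-(((Real.sqrt δ)⁻¹ * (x + y)) ^ 2 / 8)) ≤ A := by
      calc |(Polynomial.aeval ((Real.sqrt δ)⁻¹ * (x + y)) (Polynomial.hermite m) : ℝ)|
          * Real.exp (-(((Real.sqrt δ)⁻¹ * (x + y)) ^ 2 / 8))
          ≤ A * Real.exp (((Real.sqrt δ)⁻¹ * (x + y)) ^ 2 / 8)
            * Real.exp (-(((Real.sqrt δ)⁻¹ * (x + y)) ^ 2 / 8)) :=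
            mul_le_mul_of_nonneg_right (hAb _) (Real.exp_pos _).le
        _ = A := by rw [mul_assoc, ← Real.exp_add, add_neg_cancel, Real.exp_zero, mul_one]
    have hb3 : Real.exp (-(((Real.sqrt δ)⁻¹ * (x + y)) ^ 2 / 4))
        ≤ Real.exp (-x ^ 2 / (4 * δ)) * Real.exp (-y ^ 2 / (4 * δ)) := by
      have hsplit2 : Real.exp (-(((Real.sqrt δ)⁻¹ * (x + y)) ^ 2 / 4))
          = Real.exp (-x ^ 2 / (4 * δ)) * Real.exp (-y ^ 2 / (4 * δ))
            * Real.exp (-(2 * x * y) / (4 * δ)) := by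
        rw [← Real.exp_add, ← Real.exp_add]
        congr 1
        rw [ht2]
        field_simp
        ring
      rw [hsplit2]
      apply mul_le_of_le_one_right (by positivity)
      apply Real.exp_le_one_iff.mpr
      rw [neg_div]
      apply neg_nonpos.mpr
      positivity
    have hb4 : Real.exp (-(((Real.sqrt δ)⁻¹ * (x + y)) ^ 2 / 16)) ≤ 1 := by
      apply Real.exp_le_one_iff.mpr
      apply neg_nonpos.mpr
      positivity
    calc |(Real.sqrt (2 * Real.pi * δ))⁻¹
          * iteratedDeriv m (fun u : ℝ => Real.exp (-u ^ 2 / (2 * δ))) (x + y)|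
        = (Real.sqrt (2 * Real.pi * δ))⁻¹
            * |iteratedDeriv m (fun u : ℝ => Real.exp (-u ^ 2 / (2 * δ))) (x + y)| := by
          rw [abs_mul, abs_of_nonneg hc0]
      _ ≤ (Real.sqrt δ)⁻¹
            * |iteratedDeriv m (fun u : ℝ => Real.exp (-u ^ 2 / (2 * δ))) (x + y)| :=
          mul_le_mul_of_nonneg_right hc (abs_nonneg _)
      _ = ((Real.sqrt δ)⁻¹ ^ (m + 1) * Real.exp (-(((Real.sqrt δ)⁻¹ * (x + y)) ^ 2 / 16)))
            * ((|(Polynomial.aeval ((Real.sqrt δ)⁻¹ * (x + y)) (Polynomial.hermite m) : ℝ)|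
              * Real.exp (-(((Real.sqrt δ)⁻¹ * (x + y)) ^ 2 / 8)))
            * (Real.exp (-(((Real.sqrt δ)⁻¹ * (x + y)) ^ 2 / 4))
              * Real.exp (-(((Real.sqrt δ)⁻¹ * (x + y)) ^ 2 / 16)))) := by
          rw [habs, hsplit, pow_succ]
          ring
      _ ≤ ((m+1).factorial * (16 / w ^ 2) ^ (m+1))
            * (A * ((Real.exp (-x ^ 2 / (4 * δ)) * Real.exp (-y ^ 2 / (4 * δ))) * 1)) := by
          apply mul_le_mul hb1 _ (by positivity) (by positivity)
          apply mul_le_mul hb2 _ (by positivity) hA.le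
          apply mul_le_mul hb3 hb4 (Real.exp_pos _).le (by positivity)
      _ = (A * ((m+1).factorial * (16 / w ^ 2) ^ (m+1)) * Real.exp (-x ^ 2 / (4 * δ)))
            * Real.exp (-y ^ 2 / (4 * δ)) := by ring
  -- assemble
  have hpos : ∀ᵐ y ∂ν, 0 < y := by
    rw [ae_iff]
    convert hν0 using 2
    ext y
    simp [not_lt]
  have hgint : Integrable (fun y : ℝ =>
      (A * ((m+1).factorial * (16 / w ^ 2) ^ (m+1)) * Real.exp (-x ^ 2 / (4 * δ)))
        * Real.exp (-y ^ 2 / (4 * δ))) ν := by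
    apply Integrable.mono' (integrable_const
      (A * ((m+1).factorial * (16 / w ^ 2) ^ (m+1)) * Real.exp (-x ^ 2 / (4 * δ))))
    · apply Continuous.aestronglyMeasurable
      exact continuous_const.mul (Real.continuous_exp.comp ((continuous_id.pow 2).neg.div_const _))
    · apply Eventually.of_forall
      intro y
      rw [Real.norm_eq_abs, abs_of_nonneg (by positivity)]
      apply mul_le_of_le_one_right (by positivity)
      apply Real.exp_le_one_iff.mpr
      rw [neg_div]
      exact neg_nonpos.mpr (by positivity)
  rw [aux_key hδ0 ν m x]
  calc |∫ y, (Real.sqrt (2 * Real.pi * δ))⁻¹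
        * iteratedDeriv m (fun u : ℝ => Real.exp (-u ^ 2 / (2 * δ))) (x + y) ∂ν|
      ≤ ∫ y, (A * ((m+1).factorial * (16 / w ^ 2) ^ (m+1)) * Real.exp (-x ^ 2 / (4 * δ)))
          * Real.exp (-y ^ 2 / (4 * δ)) ∂ν := by
        rw [← Real.norm_eq_abs]
        apply norm_integral_le_of_norm_le hgint
        filter_upwards [hpos] with y hy
        rw [Real.norm_eq_abs]
        exact hmain y hy
    _ = (A * ((m+1).factorial * (16 / w ^ 2) ^ (m+1)) * Real.exp (-x ^ 2 / (4 * δ)))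
          * ∫ y, Real.exp (-y ^ 2 / (4 * δ)) ∂ν := integral_const_mul _ _
    _ ≤ (A * ((m+1).factorial * (16 / w ^ 2) ^ (m+1)) * Real.exp (-x ^ 2 / (4 * δ)))
          * ((Real.sqrt (4 * Real.pi) + K ^ 2) / 2) := by
        apply mul_le_mul_of_nonneg_left _ (by positivity)
        exact aux_measure_integral hK hδ0 hδ1 ν V hVm hV0 hνd hν0 hVL2
    _ = (A * ((m+1).factorial * (16 / w ^ 2) ^ (m+1)) * ((Real.sqrt (4 * Real.pi) + K ^ 2) / 2))
          * Real.exp (-x ^ 2 / (4 * δ)) := by ring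
    _ ≤ (A * ((m+1).factorial * (16 / w ^ 2) ^ (m+1)) * ((Real.sqrt (4 * Real.pi) + K ^ 2) / 2) + 1)
          * Real.exp (-x ^ 2 / (4 * δ)) := by
        apply mul_le_mul_of_nonneg_right _ (Real.exp_pos _).le
        linarith
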